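/- For every ω ∈ [0,1), the matrix P_SCI(ω) is symmetric positive definite (in particular D(ω) > 0). -/

import Mathlib

/-!
`P_SCI(ω)` is a positive multiple of `P_A - c (P_A u)(P_A u)ᵀ` with `c = ω / D(ω)`. Cauchy–Schwarz
for the inner product defined by `P_A` gives `(xᵀ P_A u)² ≤ (xᵀ P_A x) σ_A²`, so the quadratic form
of this matrix is at least `(1 - c σ_A²) xᵀ P_A x`, and `c σ_A² < 1` because
`D(ω) - ω σ_A² = (1 - ω)(σ_B² + ω σ_m²) > 0`.
-/

open Matrix

namespace Matrix

variable {ι : Type*} [Fintype ι]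

lemma PosSemidef.dotProduct_mulVec_sq_le {P : Matrix ι ι ℝ} (hP : P.PosSemidef) (x y : ι → ℝ) :
    (x ⬝ᵥ (P *ᵥ y)) ^ 2 ≤ (x ⬝ᵥ (P *ᵥ x)) * (y ⬝ᵥ (P *ᵥ y)) := by
  let := P.toSeminormedAddCommGroup hP
  let := P.toInnerProductSpace hP
  have hinner : ∀ a b : ι → ℝ, inner ℝ a b = a ⬝ᵥ (P *ᵥ b) := fun a b => by
    rw [dotProduct_comm]; rfl
  simpa only [sq, hinner] using real_inner_mul_inner_self_le x y

lemma dotProduct_vecMulVec_self_mulVec (v x : ι → ℝ) :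
    x ⬝ᵥ (vecMulVec v v *ᵥ x) = (x ⬝ᵥ v) ^ 2 := by
  rw [vecMulVec_mulVec, dotProduct_comm v x]
  simp [sq]

lemma isHermitian_vecMulVec_self (v : ι → ℝ) : (vecMulVec v v).IsHermitian := by
  simpa using (posSemidef_vecMulVec_self_star v).isHermitian

lemma PosDef.sub_smul_vecMulVec_mulVec {P : Matrix ι ι ℝ} (hP : P.PosDef) (u : ι → ℝ) {c : ℝ}
    (hc0 : 0 ≤ c) (hc : c * (u ⬝ᵥ (P *ᵥ u)) < 1) :
    (P - c • vecMulVec (P *ᵥ u) (P *ᵥ u)).PosDef := by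
  refine PosDef.of_dotProduct_mulVec_pos
    (hP.isHermitian.sub ((isHermitian_vecMulVec_self _).smul (.all c))) fun x hx => ?_
  have hPx : 0 < x ⬝ᵥ (P *ᵥ x) := by simpa using hP.dotProduct_mulVec_pos hx
  have hCS := hP.posSemidef.dotProduct_mulVec_sq_le x u
  rw [star_trivial, sub_mulVec, smul_mulVec, dotProduct_sub, dotProduct_smul, smul_eq_mul,
    dotProduct_vecMulVec_self_mulVec]
  nlinarith [mul_le_mul_of_nonneg_left hCS hc0]

end Matrix

theorem stmt_7_general {n : ℕ}
    (PA PB : Matrix (Fin n) (Fin n) ℝ)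
    (hPA : PA.PosDef) (hPB : PB.PosDef)
    (u : Fin n → ℝ) (hu : u ⬝ᵥ u = 1)
    (σm2 : ℝ)
    (σA2 σB2 : ℝ) (hσA : σA2 = u ⬝ᵥ (PA *ᵥ u)) (hσB : σB2 = u ⬝ᵥ (PB *ᵥ u))
    (D : ℝ → ℝ) (hD : ∀ ω, D ω = ω * σA2 + (1 - ω) * (σB2 + ω * σm2))
    (PSCI : ℝ → Matrix (Fin n) (Fin n) ℝ)
    (hPSCI : ∀ ω, PSCI ω =
      (1 / (1 - ω)) • (PA - (ω / D ω) • vecMulVec (PA *ᵥ u) (PA *ᵥ u)))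
    (hσm : 0 ≤ σm2) :
    ∀ ω ∈ Set.Ico (0 : ℝ) 1,
      0 < D ω ∧ (PSCI ω).IsSymm ∧ (PSCI ω).PosDef := by
  rintro ω ⟨hω0, hω1⟩
  have hu0 : u ≠ 0 := by rintro rfl; simp at hu
  have hσA2 : 0 < σA2 := by simpa [hσA] using hPA.dotProduct_mulVec_pos hu0
  have hσB2 : 0 < σB2 := by simpa [hσB] using hPB.dotProduct_mulVec_pos hu0
  have hgap : 0 < D ω - ω * σA2 := by
    rw [hD, add_sub_cancel_left]
    exact mul_pos (sub_pos.2 hω1) (add_pos_of_pos_of_nonneg hσB2 (mul_nonneg hω0 hσm))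
  have hDpos : 0 < D ω := by linarith [mul_nonneg hω0 hσA2.le]
  have hgain : ω / D ω * (u ⬝ᵥ (PA *ᵥ u)) < 1 := by
    rw [← hσA, div_mul_eq_mul_div, div_lt_one hDpos]
    linarith
  have hPD : (PSCI ω).PosDef := hPSCI ω ▸
    (hPA.sub_smul_vecMulVec_mulVec u (div_nonneg hω0 hDpos.le) hgain).smul
      (one_div_pos.2 (sub_pos.2 hω1))
  exact ⟨hDpos, isHermitian_iff_isSymm.mp hPD.isHermitian, hPD⟩

/-- For every `ω ∈ [0,1)`, the SCI covariance `P_SCI(ω)` is symmetric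
positive definite (in particular `D ω > 0`). -/
theorem stmt_7 {n : ℕ} (hn : 1 ≤ n)
    (PA PB : Matrix (Fin n) (Fin n) ℝ)
    (hPA : PA.PosDef) (hPAs : PA.IsSymm) (hPB : PB.PosDef) (hPBs : PB.IsSymm)
    (u : Fin n → ℝ) (hu : u ⬝ᵥ u = 1)
    (σm2 : ℝ)
    (σA2 σB2 : ℝ) (hσA : σA2 = u ⬝ᵥ (PA *ᵥ u)) (hσB : σB2 = u ⬝ᵥ (PB *ᵥ u))
    (D : ℝ → ℝ) (hD : ∀ ω, D ω = ω * σA2 + (1 - ω) * (σB2 + ω * σm2))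
    (PSCI : ℝ → Matrix (Fin n) (Fin n) ℝ)
    (hPSCI : ∀ ω, PSCI ω =
      (1 / (1 - ω)) • (PA - (ω / D ω) • vecMulVec (PA *ᵥ u) (PA *ᵥ u)))
    (hσm : 0 ≤ σm2) :
    ∀ ω ∈ Set.Ico (0 : ℝ) 1,
      0 < D ω ∧ (PSCI ω).IsSymm ∧ (PSCI ω).PosDef :=
  stmt_7_general PA PB hPA hPB u hu σm2 σA2 σB2 hσA hσB D hD PSCI hPSCI hσm
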